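/- Within a single timestamp of PSGraph's information perturbation, releasing both (a) the vector of intra-community degrees perturbed with Laplace noise at budget ε_i (sensitivity 2) and (b) the pair consisting of external degrees at budget ε_{i1} and inter-community edge counts at budget ε_{i2} = ε_i − ε_{i1}, satisfies ε_i-edge DP overall, because intra-community edges and inter-community edges are disjoint edge sets (parallel composition) while (a)'s two parts access overlapping inter-community edges (sequential composition). -/

import Mathlib

/-!
Each part of the release is either `ε`-DP for one kind of edge change or does not depend on
it at all, i.e. is `0`-DP for it. Adaptive sequential composition adds the budgets along the
chain `A`, `B`, `C`: an intra-community change costs `εi + 0 + 0`, an inter-community change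
`0 + εi1 + (εi - εi1)`. Since both kinds of neighbours are covered by the same bound `εi`,
the release is `εi`-DP for their union.
-/

/-- `ε`-differential privacy for a randomized algorithm `A : D → PMF Ω` with respect to a
neighboring relation `N`. -/
def IsDP {D Ω : Type*} (N : D → D → Prop) (A : D → PMF Ω) (ε : ℝ) : Prop :=
  ∀ d d', N d d' → ∀ O : Set Ω,
    (A d).toOuterMeasure O ≤ ENNReal.ofReal (Real.exp ε) * (A d').toOuterMeasure O

open scoped ENNReal

namespace PMF

variable {α β : Type*}

lemma bind_apply_le_mul {p p' : PMF α} {f f' : α → PMF β} {k k' : ℝ≥0∞}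
    (hp : ∀ a, p a ≤ k * p' a) (hf : ∀ a b, f a b ≤ k' * f' a b) (b : β) :
    p.bind f b ≤ k * k' * p'.bind f' b := by
  simp only [bind_apply, ← ENNReal.tsum_mul_left]
  refine ENNReal.tsum_le_tsum fun a => ?_
  calc p a * f a b ≤ (k * p' a) * (k' * f' a b) := mul_le_mul' (hp a) (hf a b)
    _ = k * k' * (p' a * f' a b) := by ring

lemma map_apply_le_mul {p p' : PMF α} {k : ℝ≥0∞} (hp : ∀ a, p a ≤ k * p' a)
    (g : α → β) (b : β) : p.map g b ≤ k * p'.map g b := by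
  simp only [map_apply, ← ENNReal.tsum_mul_left]
  refine ENNReal.tsum_le_tsum fun a => ?_
  split_ifs
  · exact hp a
  · simp

end PMF

namespace IsDP

variable {D Ω Ω' : Type*} {N N' : D → D → Prop} {A : D → PMF Ω} {ε ε' : ℝ}

lemma apply_le (h : IsDP N A ε) {d d' : D} (hN : N d d') (x : Ω) :
    A d x ≤ ENNReal.ofReal (Real.exp ε) * A d' x := by
  simpa [PMF.toOuterMeasure_apply_singleton] using h d d' hN {x}

lemma of_apply_le (h : ∀ d d', N d d' → ∀ x, A d x ≤ ENNReal.ofReal (Real.exp ε) * A d' x) :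
    IsDP N A ε := by
  intro d d' hN O
  rw [PMF.toOuterMeasure_apply, PMF.toOuterMeasure_apply, ← ENNReal.tsum_mul_left]
  refine ENNReal.tsum_le_tsum fun x => ?_
  by_cases hx : x ∈ O <;> simp [Set.indicator, hx, h d d' hN x]

lemma zero_of_eq (h : ∀ d d', N d d' → A d = A d') : IsDP N A 0 :=
  of_apply_le fun d d' hN x => by simp [h d d' hN]

lemma bind {f : D → Ω → PMF Ω'} (hA : IsDP N A ε) (hf : ∀ x, IsDP N (fun d => f d x) ε') :
    IsDP N (fun d => (A d).bind (f d)) (ε + ε') := by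
  refine of_apply_le fun d d' hN y => ?_
  rw [Real.exp_add, ENNReal.ofReal_mul (Real.exp_nonneg _)]
  exact PMF.bind_apply_le_mul (hA.apply_le hN) (fun x => (hf x).apply_le hN) y

lemma map (hA : IsDP N A ε) (g : Ω → Ω') : IsDP N (fun d => (A d).map g) ε :=
  of_apply_le fun _ _ hN => PMF.map_apply_le_mul (hA.apply_le hN) g

lemma or (h : IsDP N A ε) (h' : IsDP N' A ε) : IsDP (fun d d' => N d d' ∨ N' d d') A ε := by
  rintro d d' (hN | hN)
  exacts [h d d' hN, h' d d' hN]

end IsDP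

theorem psgraph_info_perturbation_dp_general {D ΩA ΩB ΩC : Type*}
    (Nintra Ninter : D → D → Prop)
    (A : D → PMF ΩA) (B : D → PMF ΩB) (C : D → PMF ΩC)
    (εi εi1 : ℝ)
    (hA_dp : IsDP Nintra A εi) (hA_inv : ∀ d d', Ninter d d' → A d = A d')
    (hB_dp : IsDP Ninter B εi1) (hB_inv : ∀ d d', Nintra d d' → B d = B d')
    (hC_dp : IsDP Ninter C (εi - εi1)) (hC_inv : ∀ d d', Nintra d d' → C d = C d') :
    IsDP (fun d d' => Nintra d d' ∨ Ninter d d')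
      (fun d => (A d).bind fun a => (B d).bind fun b => (C d).map fun c => (a, b, c))
      εi := by
  have hintra := hA_dp.bind fun a =>
    (IsDP.zero_of_eq hB_inv).bind fun b => (IsDP.zero_of_eq hC_inv).map fun c => (a, b, c)
  have hinter := (IsDP.zero_of_eq hA_inv).bind fun a =>
    hB_dp.bind fun b => hC_dp.map fun c => (a, b, c)
  rw [add_zero, add_zero] at hintra
  rw [zero_add, add_sub_cancel] at hinter
  exact hintra.or hinter

/-- PSGraph's information perturbation at one timestamp: releasing (a) the noisy
intra-community degrees (budget `ε_i`, unaffected by inter-community edge changes),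
and (b) the noisy external degrees (budget `ε_{i1}`) and inter-community edge counts
(budget `ε_{i2} = ε_i − ε_{i1}`), both unaffected by intra-community edge changes,
satisfies `ε_i`-edge DP overall, by parallel composition across the disjoint intra/inter
edge sets and sequential composition within the overlapping inter-community parts. -/
theorem psgraph_info_perturbation_dp {D ΩA ΩB ΩC : Type*}
    (Nintra Ninter : D → D → Prop)
    (A : D → PMF ΩA) (B : D → PMF ΩB) (C : D → PMF ΩC)
    (εi εi1 : ℝ) (h1 : 0 ≤ εi1) (h2 : εi1 ≤ εi)
    (hA_dp : IsDP Nintra A εi) (hA_inv : ∀ d d', Ninter d d' → A d = A d')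
    (hB_dp : IsDP Ninter B εi1) (hB_inv : ∀ d d', Nintra d d' → B d = B d')
    (hC_dp : IsDP Ninter C (εi - εi1)) (hC_inv : ∀ d d', Nintra d d' → C d = C d') :
    IsDP (fun d d' => Nintra d d' ∨ Ninter d d')
      (fun d => (A d).bind fun a => (B d).bind fun b => (C d).map fun c => (a, b, c))
      εi :=
  psgraph_info_perturbation_dp_general Nintra Ninter A B C εi εi1 hA_dp hA_inv hB_dp hB_inv hC_dp
    hC_inv
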